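/- Let G and H be Left dead-ends. Then G ≥ H (in the dead-end order) if and only if the misère outcome of G° + H is at most P, i.e. Left moving first loses G° + H. -/

import Mathlib

/-- A (finite) partizan game: finite lists of Left and Right options. -/
inductive Gm : Type where
  | node : List Gm → List Gm → Gm

/-- The Left options of a game. -/
def Gm.leftOpts : Gm → List Gm
  | .node l _ => l

/-- The Right options of a game. -/
def Gm.rightOpts : Gm → List Gm
  | .node _ r => r

/-- Disjunctive sum of games. -/
def Gm.add : Gm → Gm → Gm
  | .node gl gr, .node hl hr =>
      .node
        (gl.attach.map (fun g => Gm.add g.1 (.node hl hr)) ++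
         hl.attach.map (fun h => Gm.add (.node gl gr) h.1))
        (gr.attach.map (fun g => Gm.add g.1 (.node hl hr)) ++
         hr.attach.map (fun h => Gm.add (.node gl gr) h.1))
termination_by g h => sizeOf g + sizeOf h
decreasing_by
  all_goals first
  | (have := List.sizeOf_lt_of_mem g.2; simp; omega)
  | (have := List.sizeOf_lt_of_mem h.2; simp; omega)

mutual
/-- Left, moving first, wins `G` under misère play (a player unable to move wins):
`G` is a Left end, or some Left option is a loss for Right moving first. -/
def Gm.lwins : Gm → Prop
  | .node l _ => l = [] ∨ ∃ g ∈ l.attach, ¬ Gm.rwins g.1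
termination_by G => sizeOf G
decreasing_by have := List.sizeOf_lt_of_mem g.2; simp; omega

/-- Right, moving first, wins `G` under misère play. -/
def Gm.rwins : Gm → Prop
  | .node _ r => r = [] ∨ ∃ g ∈ r.attach, ¬ Gm.lwins g.1
termination_by G => sizeOf G
decreasing_by have := List.sizeOf_lt_of_mem g.2; simp; omega
end

/-- The game `0`. -/
def Gm.zero : Gm := .node [] []

/-- The game `* = {0|0}`. -/
def Gm.star : Gm := .node [Gm.zero] [Gm.zero]

/-- The misère adjoint `G°`. -/
def Gm.adj : Gm → Gm
  | .node [] [] => Gm.star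
  | .node [] (r :: rs) => .node ((r :: rs).attach.map (fun g => Gm.adj g.1)) [Gm.zero]
  | .node (l :: ls) [] => .node [Gm.zero] ((l :: ls).attach.map (fun g => Gm.adj g.1))
  | .node (l :: ls) (r :: rs) =>
      .node ((r :: rs).attach.map (fun g => Gm.adj g.1))
            ((l :: ls).attach.map (fun g => Gm.adj g.1))
termination_by G => sizeOf G
decreasing_by
  all_goals (have := List.sizeOf_lt_of_mem g.2; simp at this ⊢; omega)

/-- `G` is a Left dead-end: `G` has no Left options, and every subposition
likewise has no Left options. -/
inductive Gm.IsLDE : Gm → Prop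
  | mk (r : List Gm) : (∀ g ∈ r, Gm.IsLDE g) → Gm.IsLDE (.node [] r)

/-- The dead-end order on Left dead-ends: `G ≥ H` iff every Right option of `G`
is `≥` some Right option of `H`, and `G` having no Right options implies the
same of `H`. -/
def Gm.DGe : Gm → Gm → Prop
  | .node _ gr, .node _ hr =>
      (∀ g ∈ gr, ∃ h ∈ hr, Gm.DGe g h) ∧ (gr = [] → hr = [])
termination_by G _ => sizeOf G
decreasing_by
  have := List.sizeOf_lt_of_mem ‹g ∈ gr›; simp; omega

/-!
Write `G = {| G^R}`. If `G` has no Right option, `G° + H = * + H`, and Left's only move,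
to `0 + H`, loses exactly when `H` has no Right option either. Otherwise Left's moves are to the
`(G^R)° + H`. In each of them Right's move to `0 + H` loses at once, since Left has no move
there, so Right must answer with some `(G^R)° + H^R`; by induction that is a loss for Left
moving first exactly when `G^R ≥ H^R`.
-/

namespace Gm

@[simp] theorem leftOpts_node (l r : List Gm) : (node l r).leftOpts = l := rfl

@[simp] theorem rightOpts_node (l r : List Gm) : (node l r).rightOpts = r := rfl

theorem leftOpts_add (G H : Gm) :
    (G.add H).leftOpts = G.leftOpts.map (·.add H) ++ H.leftOpts.map G.add := by
  obtain ⟨gl, gr⟩ := G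
  obtain ⟨hl, hr⟩ := H
  rw [add]
  simp only [leftOpts_node, List.attach_map_val (f := fun g : Gm => g.add (node hl hr)),
    List.attach_map_val]

theorem rightOpts_add (G H : Gm) :
    (G.add H).rightOpts = G.rightOpts.map (·.add H) ++ H.rightOpts.map G.add := by
  obtain ⟨gl, gr⟩ := G
  obtain ⟨hl, hr⟩ := H
  rw [add]
  simp only [rightOpts_node, List.attach_map_val (f := fun g : Gm => g.add (node hl hr)),
    List.attach_map_val]

theorem lwins_iff (G : Gm) :
    G.lwins ↔ G.leftOpts = [] ∨ ∃ g ∈ G.leftOpts, ¬ g.rwins := by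
  obtain ⟨l, r⟩ := G
  rw [lwins]
  simp

theorem rwins_iff (G : Gm) :
    G.rwins ↔ G.rightOpts = [] ∨ ∃ g ∈ G.rightOpts, ¬ g.lwins := by
  obtain ⟨l, r⟩ := G
  rw [rwins]
  simp

theorem not_lwins_iff (G : Gm) :
    ¬ G.lwins ↔ G.leftOpts ≠ [] ∧ ∀ g ∈ G.leftOpts, g.rwins := by
  simp [lwins_iff]

theorem lwins_of_leftOpts_eq_nil {G : Gm} (h : G.leftOpts = []) : G.lwins :=
  G.lwins_iff.2 (Or.inl h)

theorem dGe_iff (G H : Gm) :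
    DGe G H ↔ (∀ g ∈ G.rightOpts, ∃ h ∈ H.rightOpts, DGe g h) ∧
      (G.rightOpts = [] → H.rightOpts = []) := by
  obtain ⟨gl, gr⟩ := G
  obtain ⟨hl, hr⟩ := H
  rw [DGe]
  rfl

theorem IsLDE.leftOpts_eq_nil {G : Gm} (hG : G.IsLDE) : G.leftOpts = [] := by
  obtain ⟨r, -⟩ := hG
  rfl

theorem IsLDE.of_mem_rightOpts {G g : Gm} (hG : G.IsLDE) (hg : g ∈ G.rightOpts) : g.IsLDE := by
  obtain ⟨r, hr⟩ := hG
  exact hr g hg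

theorem lwins_add_of_leftOpts_eq_nil {G H : Gm} (hG : G.leftOpts = []) (hH : H.leftOpts = []) :
    (G.add H).lwins :=
  lwins_of_leftOpts_eq_nil (by simp [leftOpts_add, hG, hH])

theorem adj_zero : zero.adj = star := by
  rw [zero, adj]

theorem rightOpts_adj_of_leftOpts_eq_nil {G : Gm} (hG : G.leftOpts = []) :
    G.adj.rightOpts = [zero] := by
  obtain ⟨_ | _, _ | _⟩ := G
  · rw [adj]; rfl
  · rw [adj]; rfl
  all_goals simp at hG

theorem leftOpts_adj_of_leftOpts_eq_nil {G : Gm} (hl : G.leftOpts = []) (hr : G.rightOpts ≠ []) :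
    G.adj.leftOpts = G.rightOpts.map adj := by
  obtain ⟨_ | _, _ | _⟩ := G
  · simp at hr
  · rw [adj]; simp only [leftOpts_node, rightOpts_node, List.attach_map_val]
  all_goals simp at hl

/-- In `0 + H` with `H` a Left dead-end, Right can only move to a Left end, which Left wins. -/
theorem rwins_zero_add_iff {H : Gm} (hH : H.IsLDE) : (zero.add H).rwins ↔ H.rightOpts = [] := by
  have hzero : zero.leftOpts = [] := rfl
  rw [rwins_iff]
  simp only [rightOpts_add, zero, rightOpts_node, List.map_nil, List.nil_append,
    List.map_eq_nil_iff, List.mem_map, or_iff_left_iff_imp, forall_exists_index, and_imp]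
  rintro _ h hh rfl hlose
  exact absurd (lwins_add_of_leftOpts_eq_nil hzero (hH.of_mem_rightOpts hh).leftOpts_eq_nil) hlose

/-- Right's move to `0 + H` loses, since Left then has no move. -/
theorem rwins_add_iff_of_rightOpts_eq_singleton_zero {A H : Gm} (hA : A.rightOpts = [zero])
    (hH : H.leftOpts = []) : (A.add H).rwins ↔ ∃ h ∈ H.rightOpts, ¬ (A.add h).lwins := by
  have hzero : (zero.add H).lwins := lwins_add_of_leftOpts_eq_nil rfl hH
  rw [rwins_iff]
  simp [rightOpts_add, hA, hzero]

theorem dGe_iff_not_lwins_adj_add {G H : Gm} (hG : G.IsLDE) (hH : H.IsLDE) :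
    DGe G H ↔ ¬ (G.adj.add H).lwins := by
  induction hG generalizing H with
  | mk r hopts ih =>
    rcases eq_or_ne r [] with rfl | hne
    · change DGe zero H ↔ ¬ (zero.adj.add H).lwins
      have hzero : zero.rightOpts = [] := rfl
      have hstar : star.leftOpts = [zero] := rfl
      rw [dGe_iff, not_lwins_iff, adj_zero, leftOpts_add, hstar, hH.leftOpts_eq_nil]
      simp [hzero, rwins_zero_add_iff hH]
    · rw [dGe_iff, not_lwins_iff, leftOpts_add,
        leftOpts_adj_of_leftOpts_eq_nil (G := node [] r) rfl hne, hH.leftOpts_eq_nil]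
      simp only [rightOpts_node, hne, IsEmpty.forall_iff, and_true, List.map_nil, List.append_nil,
        ne_eq, List.map_eq_nil_iff, not_false_eq_true, List.map_map, List.mem_map,
        forall_exists_index, and_imp, forall_apply_eq_imp_iff₂, true_and, Function.comp_apply]
      refine forall₂_congr fun g hg => ?_
      rw [rwins_add_iff_of_rightOpts_eq_singleton_zero
        (rightOpts_adj_of_leftOpts_eq_nil (hopts g hg).leftOpts_eq_nil) hH.leftOpts_eq_nil]
      exact exists_congr fun h => and_congr_right fun hh => ih g hg (hH.of_mem_rightOpts hh)

end Gm

/-- for Left dead-ends `G` and `H`, `G ≥ H` in the dead-end order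
iff Left moving first loses `G° + H` under misère play. -/
theorem stmt12 (G H : Gm) (hG : G.IsLDE) (hH : H.IsLDE) :
    Gm.DGe G H ↔ ¬ Gm.lwins (G.adj.add H) :=
  Gm.dGe_iff_not_lwins_adj_add hG hH
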